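/- Let 𝓛(θ) = −∫₀^θ ln|2 sin t| dt (the Lobachevsky function) and define f(x) = 𝓛(π/4 + π/(2x)) + 𝓛(π/4 − π/(2x)) for real x. Then for every real x > 2, f(x) < 2·𝓛(π/4). -/

import Mathlib

/-- The Lobachevsky function `𝓛(θ) = -∫₀^θ ln |2 sin t| dt`. -/
noncomputable def lobachevsky (θ : ℝ) : ℝ :=
  -∫ t in (0:ℝ)..θ, Real.log |2 * Real.sin t|

/-- The normalized volume function `f(x) = 𝓛(π/4 + π/(2x)) + 𝓛(π/4 - π/(2x))`. -/
noncomputable def pretzelVolumeFn (x : ℝ) : ℝ :=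
  lobachevsky (Real.pi / 4 + Real.pi / (2 * x)) +
    lobachevsky (Real.pi / 4 - Real.pi / (2 * x))

/-!
Since `𝓛' = -log (2 sin θ)` is strictly decreasing on `(0, π/2)`, the Lobachevsky function is
strictly concave on `[0, π/2]`. For `x > 2` the points `π/4 ± π/(2x)` lie in that interval and
are symmetric about `π/4`, so their values sum to less than `2 𝓛(π/4)`.
-/

open Real MeasureTheory intervalIntegral Set

/-- The singularities of `log |2 sin t|` are logarithmic, since `2 sin` is analytic. -/
theorem intervalIntegrable_log_abs_two_mul_sin (a b : ℝ) :
    IntervalIntegrable (fun t ↦ log |2 * sin t|) volume a b := by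
  simpa only [Real.norm_eq_abs] using
    (analyticOnNhd_const.mul analyticOnNhd_sin).meromorphicOn.intervalIntegrable_log_norm
      (f := fun t : ℝ ↦ 2 * sin t) (a := a) (b := b)

theorem continuous_lobachevsky : Continuous lobachevsky :=
  (continuous_primitive intervalIntegrable_log_abs_two_mul_sin 0).neg

theorem hasDerivAt_lobachevsky {θ : ℝ} (hθ : sin θ ≠ 0) :
    HasDerivAt lobachevsky (-log |2 * sin θ|) θ := by
  have hcont : ContinuousAt (fun t ↦ log |2 * sin t|) θ :=
    (by fun_prop : Continuous fun t ↦ |2 * sin t|).continuousAt.log (by simpa using hθ)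
  exact (integral_hasDerivAt_right (intervalIntegrable_log_abs_two_mul_sin 0 θ)
    (by fun_prop : Measurable fun t ↦ log |2 * sin t|).stronglyMeasurable.stronglyMeasurableAtFilter
    hcont).neg

theorem strictConcaveOn_lobachevsky : StrictConcaveOn ℝ (Icc 0 (π / 2)) lobachevsky := by
  refine StrictAntiOn.strictConcaveOn_of_deriv (convex_Icc _ _)
    continuous_lobachevsky.continuousOn ?_
  rw [interior_Icc]
  intro x hx y hy hxy
  have hsin_x : 0 < sin x := sin_pos_of_pos_of_lt_pi hx.1 (by linarith [hx.2, pi_pos])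
  have hsin_lt : sin x < sin y :=
    sin_lt_sin_of_lt_of_le_pi_div_two (by linarith [hx.1, pi_pos]) hy.2.le hxy
  rw [(hasDerivAt_lobachevsky hsin_x.ne').deriv,
    (hasDerivAt_lobachevsky (hsin_x.trans hsin_lt).ne').deriv, neg_lt_neg_iff,
    abs_of_pos (by positivity), abs_of_pos (by linarith)]
  exact log_lt_log (by positivity) (by linarith)

theorem StrictConcaveOn.add_lt_two_mul {s : Set ℝ} {f : ℝ → ℝ} (hf : StrictConcaveOn ℝ s f)
    {m d : ℝ} (h₁ : m + d ∈ s) (h₂ : m - d ∈ s) (hd : d ≠ 0) :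
    f (m + d) + f (m - d) < 2 * f m := by
  have h := hf.2 h₁ h₂ (by contrapose! hd; linarith) one_half_pos one_half_pos (add_halves 1)
  simp only [smul_eq_mul] at h
  rw [show 1 / 2 * (m + d) + 1 / 2 * (m - d) = m by ring] at h
  linarith

theorem pretzelVolumeFn_lt_limit (x : ℝ) (hx : 2 < x) :
    pretzelVolumeFn x < 2 * lobachevsky (Real.pi / 4) := by
  have hε : 0 < π / (2 * x) := by positivity
  have hε' : π / (2 * x) < π / 4 := by
    rw [div_lt_div_iff₀ (by positivity) (by norm_num)]
    nlinarith [pi_pos]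
  exact strictConcaveOn_lobachevsky.add_lt_two_mul ⟨by linarith, by linarith⟩
    ⟨by linarith, by linarith⟩ hε.ne'
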